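/- arXiv:1904.07674 — 2 statements merged into one kernel-verified Lean document; each statement's English description precedes it below -/
import Mathlib

section
/- For all integers n, k, i with 1 ≤ k ≤ n and 0 ≤ i ≤ k−1, the number of ordered set partitions (B_1,…,B_k) of [n] = {1,…,n} into k nonempty blocks such that exactly i indices j satisfy min(B_j) > min(B_l) for some l > j equals S(n,k) · c(k, k−i), where S denotes the Stirling number of the second kind and c denotes the unsigned Stirling number of the first kind. -/
open Finset

/-- The number of cycles (including fixed points) of a permutation of `Fin n`. -/
noncomputable def cycleCount {n : ℕ} (σ : Equiv.Perm (Fin n)) : ℕ :=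
  σ.cycleType.card + (Finset.univ.filter fun x => σ x = x).card

/-- The unsigned Stirling number of the first kind `c(n,k)`: the number of
permutations of an `n`-element set with exactly `k` cycles. -/
noncomputable def stirlingFirst (n k : ℕ) : ℕ :=
  Set.ncard {σ : Equiv.Perm (Fin n) | cycleCount σ = k}

/-- The signed Stirling number of the first kind `s(n,k) = (-1)^(n-k) c(n,k)`. -/
noncomputable def stirlingFirstSigned (n k : ℕ) : ℤ :=
  (-1) ^ (n - k) * (stirlingFirst n k : ℤ)

/-- `P` is an (unordered) partition of `Fin n` into nonempty blocks. -/
def IsPartitionOf (n : ℕ) (P : Finset (Finset (Fin n))) : Prop :=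
  (∀ b ∈ P, b.Nonempty) ∧ (∀ b ∈ P, ∀ c ∈ P, b ≠ c → Disjoint b c) ∧
    ∀ x : Fin n, ∃ b ∈ P, x ∈ b

/-- The Stirling number of the second kind `S(n,k)`: the number of partitions of an
`n`-element set into exactly `k` nonempty blocks. -/
noncomputable def stirlingSecond (n k : ℕ) : ℕ :=
  Set.ncard {P : Finset (Finset (Fin n)) | IsPartitionOf n P ∧ P.card = k}

/-- The Bell number `B n`: the number of partitions of an `n`-element set into
nonempty blocks. -/
noncomputable def bell (n : ℕ) : ℕ :=
  Set.ncard {P : Finset (Finset (Fin n)) | IsPartitionOf n P}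

/-- The statistic `nse` of a list: the number of positions `j` such that some later
entry is smaller than the entry at position `j`. -/
def nseList {α : Type*} [LinearOrder α] : List α → ℕ
  | [] => 0
  | a :: w => (if ∃ b ∈ w, b < a then 1 else 0) + nseList w

/-- `B` is an ordered set partition ("list of sets") of `Fin n` into `k` pairwise
disjoint nonempty blocks. -/
def IsOrderedSetPartition (n k : ℕ) (B : Fin k → Finset (Fin n)) : Prop :=
  (∀ j, (B j).Nonempty) ∧ (∀ j l, j ≠ l → Disjoint (B j) (B l)) ∧
    ∀ x : Fin n, ∃ j, x ∈ B j

/-- The statistic `nsb` of an ordered set partition: the number of indices `j`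
such that `min (B j) > min (B l)` for some `l > j`. -/
def nsbOSP {n k : ℕ} (B : Fin k → Finset (Fin n)) : ℕ :=
  (Finset.univ.filter fun j : Fin k => ∃ l, j < l ∧ (B l).min < (B j).min).card

/-- `P` is a "set of lists" partition of `Fin n`: an unordered collection of nonempty
sequences of distinct elements, with pairwise disjoint underlying sets covering `Fin n`. -/
def IsSetOfLists (n : ℕ) (P : Finset (List (Fin n))) : Prop :=
  (∀ w ∈ P, w ≠ []) ∧ (∀ w ∈ P, w.Nodup) ∧
    (∀ w ∈ P, ∀ u ∈ P, w ≠ u → ∀ x ∈ w, x ∉ u) ∧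
    ∀ x : Fin n, ∃ w ∈ P, x ∈ w

/-- The statistic `nse` of a set of lists: the sum of `nseList` over its blocks. -/
def nseSL {n : ℕ} (P : Finset (List (Fin n))) : ℕ := ∑ w ∈ P, nseList w

/-- `L` is a "list of lists" partition of `Fin n` into `k` blocks: a sequence of `k`
nonempty sequences of distinct elements, with pairwise disjoint underlying sets
covering `Fin n`. -/
def IsListOfLists (n k : ℕ) (L : Fin k → List (Fin n)) : Prop :=
  (∀ j, L j ≠ []) ∧ (∀ j, (L j).Nodup) ∧
    (∀ j l, j ≠ l → ∀ x ∈ L j, x ∉ L l) ∧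
    ∀ x : Fin n, ∃ j, x ∈ L j

/-- The statistic `nse` of a list of lists: the sum of `nseList` over its blocks. -/
def nseLL {n k : ℕ} (L : Fin k → List (Fin n)) : ℕ := ∑ j, nseList (L j)

/-- The statistic `nsb` of a list of lists: the number of indices `j` such that
`min (L j) > min (L l)` for some `l > j`. -/
def nsbLL {n k : ℕ} (L : Fin k → List (Fin n)) : ℕ :=
  (Finset.univ.filter fun j : Fin k => ∃ l, j < l ∧ (L l).minimum < (L j).minimum).card

/-!
Listing the blocks of an ordered set partition by increasing minima identifies it with a set
partition `P` into `k` blocks together with a permutation `σ` of `Fin k`, and under this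
identification `nsb` becomes `k` minus the number of right-to-left minima of `σ`. Both the
number of right-to-left minima and the number of cycles of a permutation of `Fin (k + 1)`
satisfy the recurrence `c(k + 1, m) = k c(k, m) + c(k, m - 1)`: inserting the largest letter
into a word of length `k` creates a new right-to-left minimum only at the last position, and
removing `0` from its cycle (`Equiv.Perm.decomposeFin`) loses a cycle only when `0` is fixed.
-/

open Equiv Equiv.Perm

namespace Equiv.Perm

variable {α : Type*} [Fintype α] [DecidableEq α]

theorem card_parts_partition (σ : Perm α) :
    Multiset.card σ.partition.parts =
      Multiset.card σ.cycleType + (Fintype.card α - #σ.support) := by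
  simp [parts_partition]

theorem card_cycleType_swap_mul {σ : Perm α} {x : α} (hx : σ x ≠ x)
    (hx₂ : σ (σ x) ≠ x) :
    Multiset.card (swap x (σ x) * σ).cycleType = Multiset.card σ.cycleType := by
  have hc : σ.cycleOf x ∈ σ.cycleFactorsFinset :=
    cycleOf_mem_cycleFactorsFinset_iff.mpr (mem_support.mpr hx)
  have hcycle : (σ.cycleOf x).IsCycle := isCycle_cycleOf σ hx
  have hcx₂ : σ.cycleOf x (σ x) ≠ x := by rwa [cycleOf_apply_apply_self]
  rw [← cycleOf_apply_self σ x] at hx hcx₂ ⊢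
  set c := σ.cycleOf x
  set ρ := σ * c⁻¹
  have hρc : Disjoint ρ c := disjoint_mul_inv_of_mem_cycleFactorsFinset hc
  have hσ : ρ * c = σ := inv_mul_cancel_right σ c
  have hρx : ρ x = x := (hρc x).resolve_right hx
  have hρcx : ρ (c x) = c x := (hρc (c x)).resolve_right fun h => hx (c.injective h)
  have hswap : Disjoint (swap x (c x)) ρ := fun y => by
    by_cases hy : y = x ∨ y = c x
    · rcases hy with rfl | rfl <;> simp [hρx, hρcx]
    · push Not at hy; exact .inl (swap_apply_of_ne_of_ne hy.1 hy.2)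
  have hd : Disjoint ρ (swap x (c x) * c) := hρc.mono le_rfl <| by
    rw [support_swap_mul_eq c x hcx₂]; exact sdiff_subset
  have hsplit : swap x (c x) * σ = ρ * (swap x (c x) * c) := by
    rw [← hσ, ← mul_assoc, hswap.commute.eq, mul_assoc]
  rw [hsplit, hd.cycleType_mul, ← hσ, hρc.cycleType_mul,
    (hcycle.swap_mul hx hcx₂).cycleType, hcycle.cycleType]
  simp

theorem card_parts_partition_swap_mul {σ : Perm α} {x : α} (hx : σ x ≠ x) :
    Multiset.card (swap x (σ x) * σ).partition.parts = Multiset.card σ.partition.parts + 1 := by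
  have hle := σ.support.card_le_univ
  rw [card_parts_partition, card_parts_partition]
  by_cases hx₂ : σ (σ x) = x
  · set ρ := swap x (σ x) * σ
    have hσ : swap x (σ x) * ρ = σ := swap_mul_self_mul _ _ _
    have hd : Disjoint (swap x (σ x)) ρ := fun y => by
      by_cases hy : y = x ∨ y = σ x
      · rcases hy with rfl | rfl <;> simp [ρ, hx₂]
      · push Not at hy; exact .inl (swap_apply_of_ne_of_ne hy.1 hy.2)
    have hcT := hd.cycleType_mul
    have hsupp := hd.card_support_mul
    simp only [hσ, (isCycle_swap hx.symm).cycleType, card_support_swap hx.symm] at hcT hsupp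
    simp only [hcT, hsupp, Multiset.card_add, Multiset.card_singleton] at hle ⊢
    omega
  · rw [card_cycleType_swap_mul hx hx₂, support_swap_mul_eq σ x hx₂, sdiff_singleton_eq_erase,
      card_erase_of_mem (mem_support.mpr hx)]
    have : 0 < #σ.support := card_pos.mpr ⟨x, mem_support.mpr hx⟩
    omega

end Equiv.Perm

theorem card_filter_eq_of_prodEquiv {β γ : Type*} [Fintype β] [Fintype γ] {k : ℕ}
    (Φ : Fin (k + 1) × β ≃ γ) (p₀ : Fin (k + 1)) {f : γ → ℕ} {g : β → ℕ}
    (hΦ : ∀ p b, f (Φ (p, b)) = g b + if p = p₀ then 1 else 0) (m : ℕ) :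
    #{c | f c = m} = k * #{b | g b = m} + #{b | g b + 1 = m} := by
  rw [card_filter, ← Φ.sum_comp, Fintype.sum_prod_type_right]
  simp_rw [hΦ, Fin.sum_univ_succAbove _ p₀, Fin.succAbove_ne, if_true, if_false, add_zero,
    sum_const, card_univ, Fintype.card_fin, sum_add_distrib, card_filter, smul_eq_mul, mul_sum]
  ring

theorem card_filter_eq_stirlingFirst (f : ∀ k, Perm (Fin k) → ℕ) (hf₀ : f 0 1 = 0)
    (Φ : ∀ k, Fin (k + 1) × Perm (Fin k) ≃ Perm (Fin (k + 1))) (p₀ : ∀ k, Fin (k + 1))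
    (hΦ : ∀ k p e, f (k + 1) (Φ k (p, e)) = f k e + if p = p₀ k then 1 else 0) (k m : ℕ) :
    #{σ | f k σ = m} = Nat.stirlingFirst k m := by
  induction k generalizing m with
  | zero =>
    rw [univ_unique, filter_singleton, Subsingleton.elim default (1 : Perm (Fin 0)), hf₀]
    cases m <;> simp [Nat.stirlingFirst]
  | succ k ih =>
    rw [card_filter_eq_of_prodEquiv (Φ k) (p₀ k) (hΦ k) m, ih]
    cases m with
    | zero => cases k <;> simp [Nat.stirlingFirst]
    | succ m => simp [ih, Nat.stirlingFirst_succ_succ]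

theorem cycleCount_eq_card_parts_partition {n : ℕ} (σ : Perm (Fin n)) :
    cycleCount σ = Multiset.card σ.partition.parts := by
  have h := card_filter_add_card_filter_not (s := univ) (fun x => σ x = x)
  rw [card_univ, Fintype.card_fin] at h
  rw [card_parts_partition, cycleCount, Fintype.card_fin, support]
  simp only [ne_eq] at *
  omega

theorem Equiv.Perm.decomposeFin_symm_zero_eq_extendDomain {k : ℕ} (e : Perm (Fin k)) :
    decomposeFin.symm (0, e) = e.extendDomain (finSuccAboveEquiv 0) := by
  ext x
  refine Fin.cases ?_ (fun y => ?_) x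
  · simp [extendDomain_apply_not_subtype]
  · have h := extendDomain_apply_image e (finSuccAboveEquiv 0) y
    simp only [finSuccAboveEquiv_apply, Fin.succAbove_zero] at h
    rw [decomposeFin_symm_apply_succ, swap_self, h]
    rfl

theorem cycleCount_decomposeFin_symm {k : ℕ} (p : Fin (k + 1)) (e : Perm (Fin k)) :
    cycleCount (decomposeFin.symm (p, e)) = cycleCount e + if p = 0 then 1 else 0 := by
  have h₀ : cycleCount (decomposeFin.symm (0, e)) = cycleCount e + 1 := by
    have := e.support.card_le_univ
    simp only [cycleCount_eq_card_parts_partition, card_parts_partition,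
      decomposeFin_symm_zero_eq_extendDomain, cycleType_extendDomain, card_support_extend_domain,
      Fintype.card_fin] at this ⊢
    omega
  by_cases hp : p = 0
  · rw [hp, h₀, if_pos rfl]
  · have hswap : swap 0 (decomposeFin.symm (p, e) 0) * decomposeFin.symm (p, e) =
        decomposeFin.symm (0, e) := by
      ext x
      refine Fin.cases ?_ (fun y => ?_) x <;> simp [decomposeFin_symm_apply_succ]
    have := card_parts_partition_swap_mul (σ := decomposeFin.symm (p, e)) (x := 0)
      (by rwa [decomposeFin_symm_apply_zero])
    rw [hswap, ← cycleCount_eq_card_parts_partition, ← cycleCount_eq_card_parts_partition,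
      h₀] at this
    rw [if_neg hp]
    omega

theorem card_filter_cycleCount_eq_stirlingFirst (k m : ℕ) :
    #{σ : Perm (Fin k) | cycleCount σ = m} = Nat.stirlingFirst k m :=
  card_filter_eq_stirlingFirst (fun _ => cycleCount) (by simp [cycleCount])
    (fun _ => decomposeFin.symm) (fun _ => 0) (fun _ => cycleCount_decomposeFin_symm) k m

theorem stirlingFirst_eq_nat_stirlingFirst (k m : ℕ) :
    stirlingFirst k m = Nat.stirlingFirst k m := by
  rw [stirlingFirst, Set.ncard_eq_toFinset_card', Set.toFinset_ofPred,
    card_filter_cycleCount_eq_stirlingFirst]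

section RightToLeftMinima

variable {k : ℕ}

-- Non-strict, so that the complement is exactly the set counted by `nsb`, also when `f` is not
-- injective.
def rightToLeftMinima {β : Type*} [LinearOrder β] (f : Fin k → β) : Finset (Fin k) :=
  {j | ∀ l, j < l → f j ≤ f l}

@[simp]
theorem mem_rightToLeftMinima {β : Type*} [LinearOrder β] {f : Fin k → β} {j : Fin k} :
    j ∈ rightToLeftMinima f ↔ ∀ l, j < l → f j ≤ f l := by
  simp [rightToLeftMinima]

theorem rightToLeftMinima_comp_strictMono {β γ : Type*} [LinearOrder β] [LinearOrder γ]
    {g : β → γ} (hg : StrictMono g) (f : Fin k → β) :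
    rightToLeftMinima (g ∘ f) = rightToLeftMinima f := by
  simp only [rightToLeftMinima, Function.comp_apply, hg.le_iff_le]

theorem card_filter_exists_lt_eq_sub_card_rightToLeftMinima {β : Type*} [LinearOrder β]
    (f : Fin k → β) : #{j | ∃ l, j < l ∧ f l < f j} = k - #(rightToLeftMinima f) := by
  have h := card_filter_add_card_filter_not (s := univ) (fun j => ∀ l, j < l → f j ≤ f l)
  simp only [card_univ, Fintype.card_fin, not_forall, not_le, exists_prop] at h
  rw [rightToLeftMinima]
  omega

end RightToLeftMinima

namespace Equiv.Perm

variable {k : ℕ}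

def insertMax (p : Fin (k + 1)) (e : Perm (Fin k)) : Perm (Fin (k + 1)) :=
  (finSuccEquiv' p).trans (e.optionCongr.trans finSuccEquivLast.symm)

@[simp]
theorem insertMax_apply_self (p : Fin (k + 1)) (e : Perm (Fin k)) :
    insertMax p e p = Fin.last k := by
  simp [insertMax, finSuccEquivLast]

@[simp]
theorem insertMax_apply_succAbove (p : Fin (k + 1)) (e : Perm (Fin k)) (x : Fin k) :
    insertMax p e (p.succAbove x) = (e x).castSucc := by
  simp [insertMax, finSuccEquivLast]

def insertMaxEquiv (k : ℕ) : Fin (k + 1) × Perm (Fin k) ≃ Perm (Fin (k + 1)) where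
  toFun pe := insertMax pe.1 pe.2
  invFun σ := (σ⁻¹ (Fin.last k),
    removeNone ((finSuccEquiv' (σ⁻¹ (Fin.last k))).symm.trans (σ.trans finSuccEquivLast)))
  left_inv := by
    rintro ⟨p, e⟩
    have hp : (insertMax p e)⁻¹ (Fin.last k) = p := by
      rw [inv_eq_iff_eq, insertMax_apply_self]
    simp only [hp, Prod.mk.injEq, true_and]
    convert removeNone_optionCongr e
    ext x : 1
    simp [insertMax]
  right_inv σ := by
    set p := σ⁻¹ (Fin.last k)
    set θ : Perm (Option (Fin k)) := (finSuccEquiv' p).symm.trans (σ.trans finSuccEquivLast)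
    have hθ : θ none = none := by simp [θ, p, finSuccEquivLast]
    have hθ' : (removeNone θ).optionCongr = θ := by
      rw [map_equiv_removeNone, hθ, swap_self]
      rfl
    change (finSuccEquiv' p).trans ((removeNone θ).optionCongr.trans finSuccEquivLast.symm) = σ
    ext x : 1
    simp [hθ', θ]

theorem self_mem_rightToLeftMinima_insertMax_iff (p : Fin (k + 1)) (e : Perm (Fin k)) :
    p ∈ rightToLeftMinima (insertMax p e) ↔ p = Fin.last k := by
  rw [mem_rightToLeftMinima]
  refine ⟨fun h => ?_, fun h l hl => absurd (h ▸ hl) (Fin.le_last l).not_gt⟩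
  by_contra hp
  have := h (Fin.last k) (Fin.lt_last_iff_ne_last.mpr hp)
  rw [insertMax_apply_self, Fin.last_le_iff] at this
  exact hp ((insertMax p e).injective (by rw [this, insertMax_apply_self]))

theorem succAbove_mem_rightToLeftMinima_insertMax_iff (p : Fin (k + 1)) (e : Perm (Fin k))
    (x : Fin k) :
    p.succAbove x ∈ rightToLeftMinima (insertMax p e) ↔ x ∈ rightToLeftMinima e := by
  simp only [mem_rightToLeftMinima]
  refine ⟨fun h y hy => ?_, fun h l hl => ?_⟩
  · simpa using h (p.succAbove y) (Fin.succAbove_lt_succAbove_iff.mpr hy)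
  · rcases eq_or_ne l p with rfl | hlp
    · simpa using (Fin.castSucc_lt_last (e x)).le
    · obtain ⟨y, rfl⟩ := Fin.exists_succAbove_eq hlp
      simpa using h y (Fin.succAbove_lt_succAbove_iff.mp hl)

theorem card_rightToLeftMinima_insertMax (p : Fin (k + 1)) (e : Perm (Fin k)) :
    #(rightToLeftMinima (insertMax p e)) =
      #(rightToLeftMinima e) + if p = Fin.last k then 1 else 0 := by
  have hcard {m : ℕ} (s : Finset (Fin m)) : #s = ∑ j, if j ∈ s then 1 else 0 := by simp
  rw [hcard, hcard, Fin.sum_univ_succAbove _ p]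
  simp only [self_mem_rightToLeftMinima_insertMax_iff,
    succAbove_mem_rightToLeftMinima_insertMax_iff]
  ring

theorem card_filter_card_rightToLeftMinima_eq_stirlingFirst (k m : ℕ) :
    #{σ : Perm (Fin k) | #(rightToLeftMinima σ) = m} = Nat.stirlingFirst k m :=
  card_filter_eq_stirlingFirst (fun _ σ => #(rightToLeftMinima σ)) (by simp [rightToLeftMinima])
    insertMaxEquiv (fun k => Fin.last k) (fun _ => card_rightToLeftMinima_insertMax) k m

end Equiv.Perm

section OrderedSetPartition

variable {n k : ℕ}

theorem IsPartitionOf.injOn_min {P : Finset (Finset (Fin n))} (hP : IsPartitionOf n P) :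
    Set.InjOn Finset.min (P : Set (Finset (Fin n))) := by
  intro b hb c hc h
  by_contra hne
  obtain ⟨m, hm⟩ := Finset.min_of_nonempty (hP.1 b hb)
  exact disjoint_left.mp (hP.2.1 b hb c hc hne) (mem_of_min hm) (mem_of_min (h ▸ hm))

noncomputable def IsPartitionOf.minEquiv {P : Finset (Finset (Fin n))}
    (hP : IsPartitionOf n P) : P ≃ P.image Finset.min :=
  Equiv.ofBijective (fun b => ⟨b.1.min, mem_image_of_mem _ b.2⟩)
    ⟨fun b c h => Subtype.ext (hP.injOn_min b.2 c.2 (congrArg Subtype.val h)),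
      fun ⟨_, hm⟩ => by
        obtain ⟨b, hb, rfl⟩ := mem_image.mp hm
        exact ⟨⟨b, hb⟩, rfl⟩⟩

noncomputable def IsPartitionOf.sortedBlocks {P : Finset (Finset (Fin n))}
    (hP : IsPartitionOf n P) (hk : #P = k) : Fin k ≃ P :=
  ((P.image Finset.min).orderIsoOfFin
    (by rw [card_image_of_injOn hP.injOn_min, hk])).toEquiv.trans hP.minEquiv.symm

theorem IsPartitionOf.strictMono_min_sortedBlocks {P : Finset (Finset (Fin n))}
    (hP : IsPartitionOf n P) (hk : #P = k) :
    StrictMono fun q => (hP.sortedBlocks hk q : Finset (Fin n)).min := by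
  intro q r hqr
  have key (q : Fin k) : (hP.sortedBlocks hk q : Finset (Fin n)).min =
      ((P.image Finset.min).orderIsoOfFin (by rw [card_image_of_injOn hP.injOn_min, hk]) q :
        WithTop (Fin n)) :=
    congrArg Subtype.val (hP.minEquiv.apply_symm_apply _)
  simpa only [key, Subtype.coe_lt_coe, OrderIso.lt_iff_lt] using hqr

theorem IsPartitionOf.isOrderedSetPartition {P : Finset (Finset (Fin n))}
    (hP : IsPartitionOf n P) (e : Fin k ≃ P) :
    IsOrderedSetPartition n k fun j => e j := by
  refine ⟨fun j => hP.1 _ (e j).2, fun j l hjl => hP.2.1 _ (e j).2 _ (e l).2 ?_, fun x => ?_⟩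
  · exact fun h => hjl (e.injective (Subtype.ext h))
  · obtain ⟨b, hb, hxb⟩ := hP.2.2 x
    exact ⟨e.symm ⟨b, hb⟩, by simpa using hxb⟩

theorem image_univ_coe_equiv {α : Type*} [DecidableEq α] {P : Finset α} (e : Fin k ≃ P) :
    univ.image (fun j => (e j : α)) = P := by
  ext b
  refine ⟨fun h => ?_, fun hb => mem_image.mpr ⟨e.symm ⟨b, hb⟩, mem_univ _, by simp⟩⟩
  obtain ⟨j, -, rfl⟩ := mem_image.mp h
  exact (e j).2

namespace IsOrderedSetPartition

variable {B : Fin k → Finset (Fin n)}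

theorem injective (hB : IsOrderedSetPartition n k B) : Function.Injective B := by
  intro j l hjl
  by_contra hne
  have := hB.2.1 j l hne
  rw [hjl, disjoint_self, bot_eq_empty] at this
  exact (hB.1 l).ne_empty this

theorem isPartitionOf_image (hB : IsOrderedSetPartition n k B) :
    IsPartitionOf n (univ.image B) := by
  refine ⟨?_, ?_, fun x => ?_⟩
  · simpa using hB.1
  · simp only [mem_image, mem_univ, true_and]
    rintro _ ⟨j, rfl⟩ _ ⟨l, rfl⟩ hjl
    exact hB.2.1 j l (fun h => hjl (h ▸ rfl))
  · obtain ⟨j, hj⟩ := hB.2.2 x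
    exact ⟨B j, mem_image_of_mem B (mem_univ j), hj⟩

theorem card_image (hB : IsOrderedSetPartition n k B) : #(univ.image B) = k := by
  rw [card_image_of_injective _ hB.injective, card_univ, Fintype.card_fin]

noncomputable def equivImage (hB : IsOrderedSetPartition n k B) : Fin k ≃ univ.image B :=
  Equiv.ofBijective (fun j => ⟨B j, mem_image_of_mem B (mem_univ j)⟩)
    ⟨fun j l h => hB.injective (congrArg Subtype.val h), fun ⟨_, hb⟩ => by
      obtain ⟨j, -, rfl⟩ := mem_image.mp hb
      exact ⟨j, rfl⟩⟩

@[simp]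
theorem coe_equivImage_apply (hB : IsOrderedSetPartition n k B) (j : Fin k) :
    (hB.equivImage j : Finset (Fin n)) = B j :=
  rfl

end IsOrderedSetPartition

abbrev PartitionWithCard (n k : ℕ) :=
  {P : Finset (Finset (Fin n)) // IsPartitionOf n P ∧ #P = k}

noncomputable def arrangeBlocks (P : PartitionWithCard n k) (σ : Perm (Fin k)) :
    Fin k → Finset (Fin n) :=
  fun j => (σ.trans (P.2.1.sortedBlocks P.2.2) j : Finset (Fin n))

theorem isOrderedSetPartition_arrangeBlocks (P : PartitionWithCard n k)
    (σ : Perm (Fin k)) : IsOrderedSetPartition n k (arrangeBlocks P σ) :=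
  P.2.1.isOrderedSetPartition _

theorem nsbOSP_arrangeBlocks (P : PartitionWithCard n k) (σ : Perm (Fin k)) :
    nsbOSP (arrangeBlocks P σ) = k - #(rightToLeftMinima σ) := by
  rw [nsbOSP, card_filter_exists_lt_eq_sub_card_rightToLeftMinima,
    ← rightToLeftMinima_comp_strictMono (P.2.1.strictMono_min_sortedBlocks P.2.2)]
  rfl

theorem arrangeBlocks_inj {P P' : PartitionWithCard n k} {σ σ' : Perm (Fin k)} :
    arrangeBlocks P σ = arrangeBlocks P' σ' ↔ P = P' ∧ σ = σ' := by
  refine ⟨fun h => ?_, by rintro ⟨rfl, rfl⟩; rfl⟩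
  obtain rfl : P = P' := Subtype.ext <| by
    rw [← image_univ_coe_equiv (σ.trans (P.2.1.sortedBlocks P.2.2)),
      ← image_univ_coe_equiv (σ'.trans (P'.2.1.sortedBlocks P'.2.2))]
    exact congrArg (univ.image ·) h
  exact ⟨rfl, Equiv.ext fun j =>
    (P.2.1.sortedBlocks P.2.2).injective (Subtype.ext (congrFun h j))⟩

theorem IsOrderedSetPartition.exists_arrangeBlocks_eq {B : Fin k → Finset (Fin n)}
    (hB : IsOrderedSetPartition n k B) :
    ∃ P : PartitionWithCard n k, ∃ σ, arrangeBlocks P σ = B := by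
  let P : PartitionWithCard n k := ⟨univ.image B, hB.isPartitionOf_image, hB.card_image⟩
  refine ⟨P, hB.equivImage.trans (P.2.1.sortedBlocks P.2.2).symm, funext fun j => ?_⟩
  simp [arrangeBlocks]

noncomputable def orderedSetPartitionEquiv (n k i : ℕ) :
    PartitionWithCard n k × {σ : Perm (Fin k) // k - #(rightToLeftMinima σ) = i} ≃
      {B : Fin k → Finset (Fin n) | IsOrderedSetPartition n k B ∧ nsbOSP B = i} := by
  refine Equiv.ofBijective (fun x => ⟨arrangeBlocks x.1 x.2.1,
      isOrderedSetPartition_arrangeBlocks x.1 x.2.1,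
      (nsbOSP_arrangeBlocks x.1 x.2.1).trans x.2.2⟩) ⟨?_, ?_⟩
  · rintro ⟨P, σ, hσ⟩ ⟨P', σ', hσ'⟩ h
    obtain ⟨rfl, rfl⟩ := arrangeBlocks_inj.mp (congrArg Subtype.val h)
    rfl
  · rintro ⟨B, hB, hnsb⟩
    obtain ⟨P, σ, rfl⟩ := hB.exists_arrangeBlocks_eq
    exact ⟨(P, ⟨σ, (nsbOSP_arrangeBlocks P σ).symm.trans hnsb⟩), rfl⟩

end OrderedSetPartition

theorem ordered_set_partition_nsb_count_general (n k i : ℕ) (hi : i ≤ k - 1) :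
    Set.ncard {B : Fin k → Finset (Fin n) | IsOrderedSetPartition n k B ∧ nsbOSP B = i} =
      stirlingSecond n k * stirlingFirst k (k - i) := by
  have hperm : Nat.card {σ : Perm (Fin k) // k - #(rightToLeftMinima σ) = i} =
      Nat.stirlingFirst k (k - i) := by
    rw [← card_filter_card_rightToLeftMinima_eq_stirlingFirst, Nat.card_eq_fintype_card,
      Fintype.card_subtype]
    congr 1
    ext σ
    have : #(rightToLeftMinima σ) ≤ k := card_le_univ _ |>.trans_eq (Fintype.card_fin k)
    simp only [mem_filter, mem_univ, true_and]
    omega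
  rw [← Nat.card_coe_set_eq, ← Nat.card_congr (orderedSetPartitionEquiv n k i),
    Nat.card_prod, hperm, stirlingSecond, ← Nat.card_coe_set_eq,
    stirlingFirst_eq_nat_stirlingFirst]
  rfl

/-- For `1 ≤ k ≤ n` and `0 ≤ i ≤ k-1`, the number of ordered set
partitions of `[n]` into `k` nonempty blocks with `nsb = i` equals
`S(n,k) * c(k, k-i)`. -/
theorem ordered_set_partition_nsb_count (n k i : ℕ) (hk : 1 ≤ k) (hkn : k ≤ n)
    (hi : i ≤ k - 1) :
    Set.ncard {B : Fin k → Finset (Fin n) | IsOrderedSetPartition n k B ∧ nsbOSP B = i} =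
      stirlingSecond n k * stirlingFirst k (k - i) :=
  ordered_set_partition_nsb_count_general n k i hi
end

section
/- For every integer n ≥ 1, the total number of unordered partitions of [n] = {1,…,n} into nonempty lists (over all possible numbers of blocks k) equals ∑_{l=0}^{n} c(n,l) · B_l, where c(n,l) is the unsigned Stirling number of the first kind and B_l is the l-th Bell number; equivalently, ∑_{k=1}^{n} (n!/k!) · C(n−1,k−1) = ∑_{l=0}^{n} c(n,l) · B_l. -/
open Finset

/-!
Forgetting the order inside each list sends a set of lists onto its underlying set partition
`U`, and exactly `∏ u ∈ U, |u|!` sets of lists lie over `U`. The same product counts the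
permutations `σ` that map every block of `U` to itself, so the number of sets of lists is the
number of pairs `(σ, U)` with `U` a `σ`-invariant partition. Counted from the side of `σ`, the
`σ`-invariant partitions are the partitions of the set of cycles of `σ`, hence there are
`B (cycleCount σ)` of them, and grouping the permutations by their number of cycles gives
`∑ l, c(n, l) * B l`.

For the second identity, listing the `k` lists of a set of lists in some order (`k!` ways)
gives a list of lists; concatenation identifies these with a listing of `[n]` (`n!` ways)
together with the lengths of the pieces, a composition of `n` into `k` positive parts
(`C(n - 1, k - 1)` ways).
-/

theorem Nat.card_eq_sum_card_fiber {α β : Type*} [Fintype β] (π : α → β)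
    [∀ b, Finite {a // π a = b}] : Nat.card α = ∑ b, Nat.card {a // π a = b} := by
  rw [← Nat.card_congr (Equiv.sigmaFiberEquiv π), Nat.card_sigma]

theorem Nat.card_eq_card_mul_of_card_fiber {α β : Type*} [Finite β] (π : α → β) {c : ℕ}
    [∀ b, Finite {a // π a = b}] (h : ∀ b, Nat.card {a // π a = b} = c) :
    Nat.card α = Nat.card β * c := by
  have := Fintype.ofFinite β
  rw [Nat.card_eq_sum_card_fiber π, Finset.sum_congr rfl fun b _ => h b, Finset.sum_const,
    Finset.card_univ, Nat.card_eq_fintype_card, smul_eq_mul]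

theorem Fintype.sum_card_subtype_comm {α β : Type*} [Fintype α] [Fintype β] (r : α → β → Prop) :
    ∑ a, Nat.card {b // r a b} = ∑ b, Nat.card {a // r a b} := by
  classical
  simp only [Nat.card_eq_fintype_card, Fintype.card_subtype, Finset.card_filter]
  exact Finset.sum_comm

section Arrangement
variable {α : Type*} [DecidableEq α]

def Arrangement (s : Finset α) : Type _ := {w : List α // w.Nodup ∧ w.toFinset = s}

theorem List.nodup_and_toFinset_eq_iff_perm {w : List α} {s : Finset α} :
    w.Nodup ∧ w.toFinset = s ↔ w.Perm s.toList := by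
  rw [← Multiset.coe_eq_coe, Finset.coe_toList]
  constructor
  · rintro ⟨hw, rfl⟩
    rw [List.toFinset_val, hw.dedup]
  · intro h
    have hw : w.Nodup := by simpa [← Multiset.coe_nodup, h] using s.nodup
    refine ⟨hw, Finset.ext fun x => ?_⟩
    rw [List.mem_toFinset, ← Multiset.mem_coe, h, Finset.mem_val]

noncomputable def Arrangement.equivPermutations (s : Finset α) :
    Arrangement s ≃ {w // w ∈ s.toList.permutations.toFinset} :=
  Equiv.subtypeEquivRight fun w => by
    rw [List.mem_toFinset, List.mem_permutations, List.nodup_and_toFinset_eq_iff_perm]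

instance (s : Finset α) : Finite (Arrangement s) :=
  Finite.of_equiv _ (Arrangement.equivPermutations s).symm

theorem Arrangement.card_eq_factorial (s : Finset α) :
    Nat.card (Arrangement s) = s.card.factorial := by
  rw [Nat.card_congr (Arrangement.equivPermutations s), Nat.card_eq_fintype_card,
    Fintype.card_coe, List.toFinset_card_of_nodup (List.nodup_permutations _ s.nodup_toList),
    List.length_permutations, Finset.length_toList]

theorem Arrangement.length_eq {s : Finset α} (w : Arrangement s) : w.1.length = s.card := by
  have h := List.toFinset_card_of_nodup w.2.1
  rwa [w.2.2, eq_comm] at h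

end Arrangement

namespace IsPartitionOf
variable {n : ℕ} {U : Finset (Finset (Fin n))}

theorem eq_of_mem_of_mem (hU : IsPartitionOf n U) {u v : Finset (Fin n)} (hu : u ∈ U)
    (hv : v ∈ U) {x : Fin n} (hxu : x ∈ u) (hxv : x ∈ v) : u = v := by
  by_contra huv
  exact Finset.disjoint_left.mp (hU.2.1 u hu v hv huv) hxu hxv

noncomputable def block (hU : IsPartitionOf n U) (x : Fin n) : {u // u ∈ U} :=
  ⟨(hU.2.2 x).choose, (hU.2.2 x).choose_spec.1⟩

theorem block_eq_iff (hU : IsPartitionOf n U) {x : Fin n} {u : {u // u ∈ U}} :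
    hU.block x = u ↔ x ∈ u.1 := by
  have hx : x ∈ (hU.block x).1 := (hU.2.2 x).choose_spec.2
  refine ⟨fun h => h ▸ hx, fun h => Subtype.ext ?_⟩
  exact hU.eq_of_mem_of_mem (hU.block x).2 u.2 hx h

theorem block_surjective (hU : IsPartitionOf n U) : Function.Surjective hU.block := by
  rintro ⟨u, hu⟩
  obtain ⟨x, hx⟩ := hU.1 u hu
  exact ⟨x, hU.block_eq_iff.mpr hx⟩

theorem card_le (hU : IsPartitionOf n U) : U.card ≤ n := by
  simpa using Fintype.card_le_of_surjective _ hU.block_surjective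

end IsPartitionOf

def PreservesBlocks {n : ℕ} (σ : Equiv.Perm (Fin n)) (U : Finset (Finset (Fin n))) : Prop :=
  ∀ u ∈ U, ∀ x ∈ u, σ x ∈ u

theorem IsPartitionOf.preservesBlocks_iff {n : ℕ} {U : Finset (Finset (Fin n))}
    (hU : IsPartitionOf n U) (σ : Equiv.Perm (Fin n)) :
    PreservesBlocks σ U ↔ hU.block ∘ σ = hU.block := by
  refine ⟨fun h => funext fun x => ?_, fun h u hu x hx => ?_⟩
  · exact hU.block_eq_iff.mpr (h _ (hU.block x).2 x (hU.block_eq_iff.mp rfl))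
  · have h' := congrFun h x
    rwa [Function.comp_apply, (hU.block_eq_iff (u := ⟨u, hu⟩)).mpr hx, hU.block_eq_iff] at h'

theorem IsPartitionOf.card_preservesBlocks {n : ℕ} {U : Finset (Finset (Fin n))}
    (hU : IsPartitionOf n U) :
    Nat.card {σ : Equiv.Perm (Fin n) // PreservesBlocks σ U} = ∏ u ∈ U, u.card.factorial := by
  classical
  rw [Nat.card_congr (Equiv.subtypeEquivRight hU.preservesBlocks_iff), Nat.card_eq_fintype_card,
    DomMulAct.stabilizer_card, ← Finset.prod_coe_sort U]
  refine Finset.prod_congr rfl fun u _ => ?_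
  rw [Fintype.card_congr (Equiv.subtypeEquivRight fun x => hU.block_eq_iff), Fintype.card_coe]

namespace IsSetOfLists
variable {n : ℕ} {P : Finset (List (Fin n))}

theorem toFinset_injOn (hP : IsSetOfLists n P) :
    Set.InjOn List.toFinset (P : Set (List (Fin n))) := by
  intro w hw v hv hwv
  by_contra hne
  obtain ⟨x, hx⟩ := List.exists_mem_of_ne_nil w (hP.1 w hw)
  refine hP.2.2.1 w hw v hv hne x hx ?_
  rw [← List.mem_toFinset, ← hwv, List.mem_toFinset]
  exact hx

theorem isPartitionOf_image (hP : IsSetOfLists n P) :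
    IsPartitionOf n (P.image List.toFinset) := by
  obtain ⟨hne, -, hdisj, hcov⟩ := hP
  refine ⟨?_, ?_, fun x => ?_⟩
  · simp only [Finset.mem_image]
    rintro _ ⟨w, hw, rfl⟩
    obtain ⟨x, hx⟩ := List.exists_mem_of_ne_nil w (hne w hw)
    exact ⟨x, List.mem_toFinset.mpr hx⟩
  · simp only [Finset.mem_image]
    rintro _ ⟨w, hw, rfl⟩ _ ⟨v, hv, rfl⟩ hwv
    exact Finset.disjoint_left.mpr fun x hxw hxv => hdisj w hw v hv (by rintro rfl; exact hwv rfl)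
      x (List.mem_toFinset.mp hxw) (List.mem_toFinset.mp hxv)
  · obtain ⟨w, hw, hx⟩ := hcov x
    exact ⟨w.toFinset, Finset.mem_image_of_mem _ hw, List.mem_toFinset.mpr hx⟩

theorem card_le (hP : IsSetOfLists n P) : P.card ≤ n := by
  rw [← Finset.card_image_of_injOn hP.toFinset_injOn]
  exact hP.isPartitionOf_image.card_le

theorem card_pos (hP : IsSetOfLists n P) (hn : 1 ≤ n) : 0 < P.card := by
  obtain ⟨w, hw, -⟩ := hP.2.2.2 ⟨0, hn⟩
  exact Finset.card_pos.mpr ⟨w, hw⟩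

end IsSetOfLists

section Glue
variable {n : ℕ} {U : Finset (Finset (Fin n))}

def glueArrangements (g : (u : {u // u ∈ U}) → Arrangement u.1) : Finset (List (Fin n)) :=
  U.attach.image fun u => (g u).1

theorem isSetOfLists_glueArrangements (hU : IsPartitionOf n U)
    (g : (u : {u // u ∈ U}) → Arrangement u.1) : IsSetOfLists n (glueArrangements g) := by
  have mem_of_mem (u : {u // u ∈ U}) {x : Fin n} (hx : x ∈ (g u).1) : x ∈ u.1 := by
    rw [← (g u).2.2]
    exact List.mem_toFinset.mpr hx
  simp only [IsSetOfLists, glueArrangements, Finset.mem_image, Finset.mem_attach, true_and,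
    forall_exists_index, forall_apply_eq_imp_iff]
  refine ⟨fun u hu => ?_, fun u => (g u).2.1, fun u v huv x hxu hxv => ?_, fun x => ?_⟩
  · obtain ⟨x, hx⟩ := hU.1 u.1 u.2
    rw [← (g u).2.2, hu] at hx
    simp at hx
  · have : u = v := Subtype.ext (hU.eq_of_mem_of_mem u.2 v.2 (mem_of_mem u hxu) (mem_of_mem v hxv))
    exact huv (congrArg (fun u => (g u).1) this)
  · obtain ⟨u, hu, hx⟩ := hU.2.2 x
    refine ⟨_, ⟨⟨u, hu⟩, rfl⟩, ?_⟩
    rw [← List.mem_toFinset, (g ⟨u, hu⟩).2.2]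
    exact hx

theorem image_toFinset_glueArrangements (g : (u : {u // u ∈ U}) → Arrangement u.1) :
    (glueArrangements g).image List.toFinset = U := by
  rw [glueArrangements, Finset.image_image]
  exact (Finset.image_congr fun u _ => (g u).2.2).trans Finset.attach_image_val

theorem glueArrangements_injective :
    Function.Injective (glueArrangements (U := U)) := by
  intro g g' h
  funext u
  obtain ⟨v, -, hv⟩ := Finset.mem_image.mp (h ▸ Finset.mem_image_of_mem (fun u => (g u).1)
    (Finset.mem_attach U u) : (g u).1 ∈ glueArrangements g')
  have huv : v = u := Subtype.ext (by rw [← (g' v).2.2, hv, (g u).2.2])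
  subst huv
  exact Subtype.ext hv.symm

theorem exists_glueArrangements_eq {P : Finset (List (Fin n))} (hP : IsSetOfLists n P)
    (hPU : P.image List.toFinset = U) :
    ∃ g : (u : {u // u ∈ U}) → Arrangement u.1, glueArrangements g = P := by
  have hlist (u : {u // u ∈ U}) : ∃ w ∈ P, w.toFinset = u.1 :=
    Finset.mem_image.mp (hPU ▸ u.2)
  choose w hwP hwu using hlist
  refine ⟨fun u => ⟨w u, hP.2.1 _ (hwP u), hwu u⟩, Finset.ext fun v => ⟨?_, fun hv => ?_⟩⟩
  · simp only [glueArrangements, Finset.mem_image]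
    rintro ⟨u, -, rfl⟩
    exact hwP u
  · have hu : v.toFinset ∈ U := hPU ▸ Finset.mem_image_of_mem _ hv
    refine Finset.mem_image.mpr ⟨⟨_, hu⟩, Finset.mem_attach _ _, ?_⟩
    exact hP.toFinset_injOn (hwP _) hv (hwu _)

noncomputable def arrangementsEquivSetOfLists (hU : IsPartitionOf n U) :
    ((u : {u // u ∈ U}) → Arrangement u.1) ≃
      {P // IsSetOfLists n P ∧ P.image List.toFinset = U} :=
  Equiv.ofBijective
    (fun g => ⟨glueArrangements g, isSetOfLists_glueArrangements hU g,
      image_toFinset_glueArrangements g⟩)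
    ⟨fun _ _ h => glueArrangements_injective (congrArg Subtype.val h), fun P =>
      (exists_glueArrangements_eq P.2.1 P.2.2).imp fun _ hg => Subtype.ext hg⟩

end Glue

theorem card_setOfLists_image_toFinset_eq {n : ℕ} {U : Finset (Finset (Fin n))}
    (hU : IsPartitionOf n U) :
    Nat.card {P // IsSetOfLists n P ∧ P.image List.toFinset = U} =
      ∏ u ∈ U, u.card.factorial := by
  rw [← Nat.card_congr (arrangementsEquivSetOfLists hU), Nat.card_pi, ← Finset.prod_coe_sort U]
  exact Finset.prod_congr rfl fun u _ => Arrangement.card_eq_factorial u.1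

section UnderlyingPartition
open scoped Classical
variable {n : ℕ}

def underlyingPartition (P : {P // IsSetOfLists n P}) : {U // IsPartitionOf n U} :=
  ⟨P.1.image List.toFinset, P.2.isPartitionOf_image⟩

def underlyingPartitionFiberEquiv (U : {U // IsPartitionOf n U}) :
    {P // underlyingPartition P = U} ≃
      {P // IsSetOfLists n P ∧ P.image List.toFinset = U.1} :=
  (Equiv.subtypeEquivRight fun _ => Subtype.ext_iff).trans
    (Equiv.subtypeSubtypeEquivSubtypeInter (IsSetOfLists n) (·.image List.toFinset = U.1))

instance (U : {U // IsPartitionOf n U}) : Finite {P // underlyingPartition P = U} :=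
  Finite.of_equiv _ ((arrangementsEquivSetOfLists U.2).trans
    (underlyingPartitionFiberEquiv U).symm)

instance : Finite {P // IsSetOfLists n P} :=
  Finite.of_equiv _ (Equiv.sigmaFiberEquiv underlyingPartition)

theorem card_setOfLists_eq_sum_prod_factorial :
    Nat.card {P // IsSetOfLists n P} =
      ∑ U : {U // IsPartitionOf n U}, ∏ u ∈ U.1, u.card.factorial := by
  rw [Nat.card_eq_sum_card_fiber underlyingPartition]
  refine Finset.sum_congr rfl fun U _ => ?_
  rw [Nat.card_congr (underlyingPartitionFiberEquiv U), card_setOfLists_image_toFinset_eq U.2]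

end UnderlyingPartition

theorem Equiv.Perm.SameCycle.mem_of_forall_apply_mem {α : Type*} [Finite α] {σ : Equiv.Perm α}
    {u : Finset α} (hu : ∀ x ∈ u, σ x ∈ u) {x y : α} (h : σ.SameCycle x y) (hx : x ∈ u) :
    y ∈ u := by
  obtain ⟨i, -, rfl⟩ := h.exists_pow_eq'
  clear h
  induction i with
  | zero => exact hx
  | succ i ih => rw [pow_succ', Equiv.Perm.mul_apply]; exact hu _ ih

namespace Equiv.Perm
variable {α : Type*} [Fintype α] [DecidableEq α] (σ : Perm α)

def cycleClass (x : α) : Finset α := Finset.univ.filter (σ.SameCycle x)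

variable {σ}

theorem mem_cycleClass {x y : α} : y ∈ σ.cycleClass x ↔ σ.SameCycle x y := by
  simp [cycleClass]

theorem cycleClass_eq_iff {x y : α} : σ.cycleClass x = σ.cycleClass y ↔ σ.SameCycle x y := by
  refine ⟨fun h => ?_, fun h => Finset.ext fun z => ?_⟩
  · have hy : y ∈ σ.cycleClass x := h ▸ mem_cycleClass.mpr (SameCycle.refl σ y)
    exact mem_cycleClass.mp hy
  · simp only [mem_cycleClass]
    exact ⟨h.symm.trans, h.trans⟩

theorem cycleClass_of_apply_eq {x : α} (hx : σ x = x) : σ.cycleClass x = {x} := by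
  ext y
  rw [mem_cycleClass, Finset.mem_singleton]
  refine ⟨fun ⟨i, hi⟩ => ?_, fun h => h ▸ SameCycle.refl σ x⟩
  rw [← hi, zpow_apply_eq_self_of_apply_eq_self hx]

theorem cycleClass_of_apply_ne {x : α} (hx : σ x ≠ x) :
    σ.cycleClass x = (σ.cycleOf x).support := by
  ext y
  rw [mem_cycleClass, mem_support_cycleOf_iff, mem_support]
  exact (and_iff_left hx).symm

theorem support_eq_cycleClass_of_mem_cycleFactorsFinset {c : Perm α} (hc : c ∈ σ.cycleFactorsFinset)
    {x : α} (hx : x ∈ c.support) : c.support = σ.cycleClass x := by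
  have hσx : σ x ≠ x := mem_support.mp (mem_cycleFactorsFinset_support_le hc hx)
  rw [cycle_is_cycleOf hx hc, cycleClass_of_apply_ne hσx]

variable (σ)

theorem image_cycleClass :
    Finset.univ.image σ.cycleClass =
      (Finset.univ.filter fun x => σ x = x).image (fun x => {x}) ∪
        σ.cycleFactorsFinset.image support := by
  ext s
  simp only [Finset.mem_union, Finset.mem_image, Finset.mem_filter, Finset.mem_univ, true_and]
  constructor
  · rintro ⟨x, rfl⟩
    by_cases hx : σ x = x
    · exact Or.inl ⟨x, hx, (cycleClass_of_apply_eq hx).symm⟩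
    · exact Or.inr ⟨σ.cycleOf x, cycleOf_mem_cycleFactorsFinset_iff.mpr (mem_support.mpr hx),
        (cycleClass_of_apply_ne hx).symm⟩
  · rintro (⟨x, hx, rfl⟩ | ⟨c, hc, rfl⟩)
    · exact ⟨x, cycleClass_of_apply_eq hx⟩
    · obtain ⟨x, hx⟩ := (mem_cycleFactorsFinset_iff.mp hc).1.nonempty_support
      exact ⟨x, (support_eq_cycleClass_of_mem_cycleFactorsFinset hc hx).symm⟩

theorem card_image_cycleClass :
    (Finset.univ.image σ.cycleClass).card =
      σ.cycleType.card + (Finset.univ.filter fun x => σ x = x).card := by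
  have hdisj : _root_.Disjoint ((Finset.univ.filter fun x => σ x = x).image (fun x => {x}))
      (σ.cycleFactorsFinset.image support) := by
    simp only [Finset.disjoint_left, Finset.mem_image, Finset.mem_filter, Finset.mem_univ,
      true_and, not_exists, not_and]
    rintro _ ⟨x, hx, rfl⟩ c hc hcx
    exact mem_support.mp
      (mem_cycleFactorsFinset_support_le hc (hcx ▸ Finset.mem_singleton_self x)) hx
  have hinj : Set.InjOn support (σ.cycleFactorsFinset : Set (Perm α)) := by
    intro c hc d hd hcd
    obtain ⟨x, hx⟩ := (mem_cycleFactorsFinset_iff.mp hc).1.nonempty_support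
    rw [cycle_is_cycleOf hx hc, cycle_is_cycleOf (hcd ▸ hx : x ∈ d.support) hd]
  rw [image_cycleClass, Finset.card_union_of_disjoint hdisj,
    Finset.card_image_of_injective _ Finset.singleton_injective,
    Finset.card_image_of_injOn hinj, cycleType_def, Multiset.card_map, add_comm]
  rfl

end Equiv.Perm

section SaturatedPartitions
variable {n m : ℕ} {f : Fin n → Fin m}

def SaturatedBlocks (f : Fin n → Fin m) (U : Finset (Finset (Fin n))) : Prop :=
  ∀ u ∈ U, ∀ x ∈ u, ∀ y, f y = f x → y ∈ u

theorem filter_mem_image_eq_self {u : Finset (Fin n)} (hu : ∀ x ∈ u, ∀ y, f y = f x → y ∈ u) :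
    Finset.univ.filter (f · ∈ u.image f) = u := by
  ext y
  simp only [Finset.mem_filter, Finset.mem_univ, true_and, Finset.mem_image]
  exact ⟨fun ⟨x, hx, hxy⟩ => hu x hx y hxy.symm, fun hy => ⟨y, hy, rfl⟩⟩

theorem image_filter_mem_eq_self (hf : Function.Surjective f) (r : Finset (Fin m)) :
    (Finset.univ.filter (f · ∈ r)).image f = r := by
  ext z
  simp only [Finset.mem_image, Finset.mem_filter, Finset.mem_univ, true_and]
  refine ⟨fun ⟨x, hx, hxz⟩ => hxz ▸ hx, fun hz => ?_⟩
  obtain ⟨x, rfl⟩ := hf z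
  exact ⟨x, hz, rfl⟩

theorem IsPartitionOf.image_of_saturatedBlocks (hf : Function.Surjective f)
    {U : Finset (Finset (Fin n))} (hU : IsPartitionOf n U) (hsat : SaturatedBlocks f U) :
    IsPartitionOf m (U.image (·.image f)) := by
  simp only [IsPartitionOf, Finset.mem_image, forall_exists_index, and_imp,
    forall_apply_eq_imp_iff₂]
  refine ⟨fun u hu => (hU.1 u hu).image f, fun u hu v hv huv => ?_, fun z => ?_⟩
  · refine Finset.disjoint_left.mpr fun z hzu hzv => huv ?_
    obtain ⟨x, hx, rfl⟩ := Finset.mem_image.mp hzu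
    obtain ⟨y, hy, hyx⟩ := Finset.mem_image.mp hzv
    rw [hU.eq_of_mem_of_mem hu hv hx (hsat v hv y hy x hyx.symm)]
  · obtain ⟨x, rfl⟩ := hf z
    obtain ⟨u, hu, hx⟩ := hU.2.2 x
    exact ⟨_, ⟨u, hu, rfl⟩, Finset.mem_image_of_mem f hx⟩

theorem IsPartitionOf.preimage (hf : Function.Surjective f) {R : Finset (Finset (Fin m))}
    (hR : IsPartitionOf m R) :
    IsPartitionOf n (R.image fun r => Finset.univ.filter (f · ∈ r)) := by
  simp only [IsPartitionOf, Finset.mem_image, forall_exists_index, and_imp,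
    forall_apply_eq_imp_iff₂]
  refine ⟨fun r hr => ?_, fun r hr s hs hrs => ?_, fun x => ?_⟩
  · obtain ⟨z, hz⟩ := hR.1 r hr
    obtain ⟨x, rfl⟩ := hf z
    exact ⟨x, by simpa using hz⟩
  · refine Finset.disjoint_left.mpr fun x hxr hxs => hrs ?_
    simp only [Finset.mem_filter, Finset.mem_univ, true_and] at hxr hxs
    rw [hR.eq_of_mem_of_mem hr hs hxr hxs]
  · obtain ⟨r, hr, hx⟩ := hR.2.2 (f x)
    exact ⟨_, ⟨r, hr, rfl⟩, by simpa using hx⟩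

noncomputable def saturatedPartitionEquiv (hf : Function.Surjective f) :
    {U // IsPartitionOf n U ∧ SaturatedBlocks f U} ≃ {R // IsPartitionOf m R} where
  toFun U := ⟨U.1.image (·.image f), U.2.1.image_of_saturatedBlocks hf U.2.2⟩
  invFun R := ⟨R.1.image fun r => Finset.univ.filter (f · ∈ r), R.2.preimage hf, by
    rintro _ hu x hx y hxy
    obtain ⟨r, -, rfl⟩ := Finset.mem_image.mp hu
    simp only [Finset.mem_filter, Finset.mem_univ, true_and] at hx ⊢
    exact hxy ▸ hx⟩
  left_inv U := Subtype.ext <| by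
    dsimp only
    rw [Finset.image_image]
    exact (Finset.image_congr fun u hu => filter_mem_image_eq_self (U.2.2 u hu)).trans
      Finset.image_id
  right_inv R := Subtype.ext <| by
    dsimp only
    rw [Finset.image_image]
    exact (Finset.image_congr fun r _ => image_filter_mem_eq_self hf r).trans Finset.image_id

theorem card_saturatedPartitions (hf : Function.Surjective f) :
    Nat.card {U // IsPartitionOf n U ∧ SaturatedBlocks f U} = bell m := by
  rw [Nat.card_congr (saturatedPartitionEquiv hf), bell, ← Nat.card_coe_set_eq]
  rfl

end SaturatedPartitions

section CycleIndex
open Equiv.Perm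
variable {n : ℕ}

theorem cycleCount_eq_card_image_cycleClass (σ : Equiv.Perm (Fin n)) :
    cycleCount σ = (Finset.univ.image σ.cycleClass).card :=
  σ.card_image_cycleClass.symm

theorem cycleCount_le (σ : Equiv.Perm (Fin n)) : cycleCount σ ≤ n := by
  rw [cycleCount_eq_card_image_cycleClass]
  exact Finset.card_image_le.trans (Finset.card_fin n).le

noncomputable def cycleIndex (σ : Equiv.Perm (Fin n)) (x : Fin n) : Fin (cycleCount σ) :=
  ((Finset.univ.image σ.cycleClass).equivFin.trans
      (finCongr (cycleCount_eq_card_image_cycleClass σ).symm))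
    ⟨σ.cycleClass x, Finset.mem_image_of_mem _ (Finset.mem_univ x)⟩

theorem cycleIndex_eq_iff {σ : Equiv.Perm (Fin n)} {x y : Fin n} :
    cycleIndex σ x = cycleIndex σ y ↔ σ.SameCycle x y := by
  rw [cycleIndex, cycleIndex, Equiv.apply_eq_iff_eq, Subtype.mk.injEq, cycleClass_eq_iff]

theorem cycleIndex_surjective (σ : Equiv.Perm (Fin n)) : Function.Surjective (cycleIndex σ) := by
  refine (Equiv.surjective _).comp ?_
  rintro ⟨s, hs⟩
  obtain ⟨x, -, rfl⟩ := Finset.mem_image.mp hs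
  exact ⟨x, rfl⟩

theorem preservesBlocks_iff_saturatedBlocks (σ : Equiv.Perm (Fin n))
    (U : Finset (Finset (Fin n))) : PreservesBlocks σ U ↔ SaturatedBlocks (cycleIndex σ) U :=
  ⟨fun h u hu _ hx _ hxy => (cycleIndex_eq_iff.mp hxy).symm.mem_of_forall_apply_mem (h u hu) hx,
    fun h u hu x hx =>
      h u hu x hx (σ x) (cycleIndex_eq_iff.mpr (sameCycle_apply_left.mpr (SameCycle.refl σ x)))⟩

theorem card_invariantPartitions (σ : Equiv.Perm (Fin n)) :
    Nat.card {U : {U // IsPartitionOf n U} // PreservesBlocks σ U.1} = bell (cycleCount σ) := by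
  rw [Nat.card_congr (Equiv.subtypeSubtypeEquivSubtypeInter (IsPartitionOf n) (PreservesBlocks σ)),
    ← card_saturatedPartitions (cycleIndex_surjective σ)]
  exact Nat.card_congr (Equiv.subtypeEquivRight fun U =>
    and_congr_right' (preservesBlocks_iff_saturatedBlocks σ U))

end CycleIndex

theorem stirlingFirst_eq_card_filter (n l : ℕ) :
    stirlingFirst n l =
      (Finset.univ.filter fun σ : Equiv.Perm (Fin n) => cycleCount σ = l).card := by
  rw [stirlingFirst, ← Set.ncard_coe_finset, Finset.coe_filter_univ]

open scoped Classical in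
theorem sum_prod_factorial_eq_sum_stirlingFirst_mul_bell (n : ℕ) :
    ∑ U : {U // IsPartitionOf n U}, ∏ u ∈ U.1, u.card.factorial =
      ∑ l ∈ Finset.range (n + 1), stirlingFirst n l * bell l := by
  calc ∑ U : {U // IsPartitionOf n U}, ∏ u ∈ U.1, u.card.factorial
      = ∑ U : {U // IsPartitionOf n U}, Nat.card {σ // PreservesBlocks σ U.1} :=
        Finset.sum_congr rfl fun U _ => U.2.card_preservesBlocks.symm
    _ = ∑ σ, Nat.card {U : {U // IsPartitionOf n U} // PreservesBlocks σ U.1} :=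
        Fintype.sum_card_subtype_comm _
    _ = ∑ σ, bell (cycleCount σ) := Finset.sum_congr rfl fun σ _ => card_invariantPartitions σ
    _ = ∑ l ∈ Finset.range (n + 1), ∑ σ with cycleCount σ = l, bell (cycleCount σ) :=
        (Finset.sum_fiberwise_of_maps_to
          (fun σ _ => Finset.mem_range.mpr (Nat.lt_succ_of_le (cycleCount_le σ))) _).symm
    _ = ∑ l ∈ Finset.range (n + 1), stirlingFirst n l * bell l := by
        refine Finset.sum_congr rfl fun l _ => ?_
        rw [Finset.sum_congr rfl fun σ hσ => by rw [(Finset.mem_filter.mp hσ).2],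
          Finset.sum_const, smul_eq_mul, stirlingFirst_eq_card_filter]

section Compositions

def compositionShiftEquiv (k m : ℕ) :
    {d : Fin k → ℕ // ∑ j, d j = m} ≃ {c : Fin k → ℕ // (∀ j, 0 < c j) ∧ ∑ j, c j = m + k} where
  toFun d := ⟨fun j => d.1 j + 1, fun j => Nat.succ_pos _, by
    simp [Finset.sum_add_distrib, d.2]⟩
  invFun c := ⟨fun j => c.1 j - 1, by
    show ∑ j, (c.1 j - 1) = m
    have h : ∑ j, (c.1 j - 1 + 1) = m + k :=
      (Finset.sum_congr rfl fun j _ => Nat.sub_add_cancel (c.2.1 j)).trans c.2.2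
    simp only [Finset.sum_add_distrib, Finset.sum_const, Finset.card_univ, Fintype.card_fin,
      smul_eq_mul, mul_one] at h
    omega⟩
  left_inv d := by ext; simp
  right_inv c := by ext j; exact Nat.sub_add_cancel (c.2.1 j)

theorem card_compositions {k n : ℕ} (hk : 0 < k) (hkn : k ≤ n) :
    Nat.card {c : Fin k → ℕ // (∀ j, 0 < c j) ∧ ∑ j, c j = n} = (n - 1).choose (k - 1) := by
  obtain ⟨m, rfl⟩ := Nat.exists_eq_add_of_le' hkn
  rw [← Nat.card_congr (compositionShiftEquiv k m),
    ← Nat.card_congr (Sym.equivNatSumOfFintype (Fin k) m), Nat.card_eq_fintype_card,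
    Sym.card_sym_eq_multichoose, Fintype.card_fin, Nat.multichoose_eq,
    show k + m - 1 = (k - 1) + m by omega, show m + k - 1 = (k - 1) + m by omega,
    Nat.choose_symm_add]

end Compositions

theorem List.splitLengths_map_length_flatten {α : Type*} (L : List (List α)) :
    (L.map List.length).splitLengths L.flatten = L := by
  induction L with
  | nil => rfl
  | cons l L ih => simp [ih]

section SplitFn
variable {α : Type*} {k : ℕ}

def splitFn (c : Fin k → ℕ) (w : List α) (j : Fin k) : List α :=
  ((List.ofFn c).splitLengths w)[j.1]'(by simp)

theorem ofFn_splitFn (c : Fin k → ℕ) (w : List α) :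
    List.ofFn (splitFn c w) = (List.ofFn c).splitLengths w :=
  List.ext_getElem (by simp) fun i _ _ => by simp [splitFn]

theorem length_splitFn {c : Fin k → ℕ} {w : List α} (h : ∑ j, c j ≤ w.length) (j : Fin k) :
    (splitFn c w j).length = c j := by
  rw [splitFn, List.splitLengths_length_getElem _ _ (by rwa [List.sum_ofFn]), List.getElem_ofFn]

theorem flatten_ofFn_splitFn {c : Fin k → ℕ} {w : List α} (h : w.length ≤ ∑ j, c j) :
    (List.ofFn (splitFn c w)).flatten = w := by
  rw [ofFn_splitFn, List.flatten_splitLengths _ _ (by rwa [List.sum_ofFn])]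

theorem splitFn_length_flatten (L : Fin k → List α) :
    splitFn (fun j => (L j).length) (List.ofFn L).flatten = L := by
  funext j
  have h : (List.ofFn fun j => (L j).length) = (List.ofFn L).map List.length :=
    List.map_ofFn.symm
  simp only [splitFn, h, List.splitLengths_map_length_flatten, List.getElem_ofFn]

end SplitFn

section ListOfLists
variable {n k : ℕ}

theorem isListOfLists_iff {L : Fin k → List (Fin n)} :
    IsListOfLists n k L ↔
      (∀ j, L j ≠ []) ∧ (List.ofFn L).flatten.Nodup ∧
        (List.ofFn L).flatten.toFinset = Finset.univ := by
  have hdisj : (∀ j l, j ≠ l → ∀ x ∈ L j, x ∉ L l) ↔ (List.ofFn L).Pairwise List.Disjoint := by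
    rw [List.pairwise_ofFn]
    refine ⟨fun h i j hij x hi hj => h i j hij.ne x hi hj, fun h i j hij x hi hj => ?_⟩
    rcases hij.lt_or_gt with hlt | hlt
    · exact h hlt hi hj
    · exact h hlt hj hi
  have hcov : (∀ x, ∃ j, x ∈ L j) ↔ (List.ofFn L).flatten.toFinset = Finset.univ := by
    simp [Finset.eq_univ_iff_forall, List.mem_flatten, List.mem_ofFn]
  rw [IsListOfLists, List.nodup_flatten, List.forall_mem_ofFn_iff, hdisj, hcov, and_assoc]

theorem IsListOfLists.sum_length {L : Fin k → List (Fin n)} (hL : IsListOfLists n k L) :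
    ∑ j, (L j).length = n := by
  have h := isListOfLists_iff.mp hL
  let w : Arrangement (Finset.univ : Finset (Fin n)) := ⟨_, h.2⟩
  calc ∑ j, (L j).length = w.1.length := by
        rw [List.length_flatten, List.map_ofFn, List.sum_ofFn]
        rfl
    _ = n := w.length_eq.trans (Finset.card_fin n)

noncomputable def listOfListsEquiv (n k : ℕ) :
    {L // IsListOfLists n k L} ≃
      Arrangement (Finset.univ : Finset (Fin n)) ×
        {c : Fin k → ℕ // (∀ j, 0 < c j) ∧ ∑ j, c j = n} where
  toFun L := (⟨_, (isListOfLists_iff.mp L.2).2⟩, ⟨fun j => (L.1 j).length,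
    fun j => List.length_pos_iff.mpr ((isListOfLists_iff.mp L.2).1 j), L.2.sum_length⟩)
  invFun wc := ⟨splitFn wc.2.1 wc.1.1, by
    have hlen : wc.1.1.length = ∑ j, wc.2.1 j := by
      rw [wc.1.length_eq, Finset.card_fin, wc.2.2.2]
    refine isListOfLists_iff.mpr ⟨fun j h => ?_, ?_⟩
    · have := length_splitFn hlen.ge j
      rw [h, List.length_nil] at this
      exact (wc.2.2.1 j).ne this
    · rw [flatten_ofFn_splitFn hlen.le]
      exact wc.1.2⟩
  left_inv L := Subtype.ext (splitFn_length_flatten L.1)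
  right_inv wc := by
    have hlen : wc.1.1.length = ∑ j, wc.2.1 j := by
      rw [wc.1.length_eq, Finset.card_fin, wc.2.2.2]
    exact Prod.ext (Subtype.ext (flatten_ofFn_splitFn hlen.le))
      (Subtype.ext (funext (length_splitFn hlen.ge)))

theorem card_listOfLists (hk : 0 < k) (hkn : k ≤ n) :
    Nat.card {L // IsListOfLists n k L} = n.factorial * (n - 1).choose (k - 1) := by
  rw [Nat.card_congr (listOfListsEquiv n k), Nat.card_prod, Arrangement.card_eq_factorial,
    Finset.card_fin, card_compositions hk hkn]

end ListOfLists

section OrderingBlocks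
variable {n k : ℕ}

theorem IsListOfLists.injective {L : Fin k → List (Fin n)} (hL : IsListOfLists n k L) :
    Function.Injective L := by
  intro i j hij
  by_contra hne
  obtain ⟨x, hx⟩ := List.exists_mem_of_ne_nil _ (hL.1 i)
  exact hL.2.2.1 i j hne x hx (hij ▸ hx)

theorem IsListOfLists.isSetOfLists_image {L : Fin k → List (Fin n)} (hL : IsListOfLists n k L) :
    IsSetOfLists n (Finset.univ.image L) := by
  simp only [IsSetOfLists, Finset.mem_image, Finset.mem_univ, true_and, forall_exists_index,
    forall_apply_eq_imp_iff]
  refine ⟨hL.1, hL.2.1, fun i j hij => hL.2.2.1 i j fun h => hij (h ▸ rfl), fun x => ?_⟩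
  obtain ⟨j, hj⟩ := hL.2.2.2 x
  exact ⟨_, ⟨j, rfl⟩, hj⟩

def IsListOfLists.toSetOfLists (L : {L // IsListOfLists n k L}) :
    {P // IsSetOfLists n P ∧ P.card = k} :=
  ⟨Finset.univ.image L.1, L.2.isSetOfLists_image, by
    rw [Finset.card_image_of_injective _ L.2.injective, Finset.card_univ, Fintype.card_fin]⟩

theorem IsSetOfLists.isListOfLists_of_equiv {P : Finset (List (Fin n))} (hP : IsSetOfLists n P)
    (e : Fin k ≃ P) : IsListOfLists n k fun j => (e j).1 := by
  refine ⟨fun j => hP.1 _ (e j).2, fun j => hP.2.1 _ (e j).2, fun i j hij => ?_, fun x => ?_⟩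
  · exact hP.2.2.1 _ (e i).2 _ (e j).2 fun h => hij (e.injective (Subtype.ext h))
  · obtain ⟨w, hw, hx⟩ := hP.2.2.2 x
    exact ⟨e.symm ⟨w, hw⟩, by simpa using hx⟩

noncomputable def equivToSetOfListsFiber (P : {P // IsSetOfLists n P ∧ P.card = k}) :
    (Fin k ≃ P.1) ≃ {L // IsListOfLists.toSetOfLists L = P} :=
  Equiv.ofBijective
    (fun e => ⟨⟨_, P.2.1.isListOfLists_of_equiv e⟩, Subtype.ext <| Finset.ext fun w => by
      simp only [IsListOfLists.toSetOfLists, Finset.mem_image, Finset.mem_univ, true_and]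
      exact ⟨fun ⟨j, hj⟩ => by rw [← hj]; exact (e j).2, fun hw => ⟨e.symm ⟨w, hw⟩, by simp⟩⟩⟩)
    ⟨fun e e' h => Equiv.ext fun j =>
        Subtype.ext (congrFun (congrArg (fun L => L.1.1) h) j),
      fun L => by
        have hP : Finset.univ.image L.1.1 = P.1 := congrArg Subtype.val L.2
        have hmem (j : Fin k) : L.1.1 j ∈ P.1 := hP ▸ Finset.mem_image_of_mem _ (Finset.mem_univ j)
        have hbij : Function.Bijective fun j => (⟨L.1.1 j, hmem j⟩ : P.1) :=
          (Fintype.bijective_iff_injective_and_card _).mpr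
            ⟨fun i j h => L.1.2.injective (congrArg Subtype.val h), by simp [P.2.2]⟩
        exact ⟨Equiv.ofBijective _ hbij, rfl⟩⟩

instance : Finite {P // IsSetOfLists n P ∧ P.card = k} :=
  Finite.of_injective (fun P => (⟨P.1, P.2.1⟩ : {P // IsSetOfLists n P}))
    fun _ _ h => Subtype.ext (congrArg (fun P : {P // IsSetOfLists n P} => P.1) h)

instance (P : {P // IsSetOfLists n P ∧ P.card = k}) :
    Finite {L // IsListOfLists.toSetOfLists L = P} :=
  Finite.of_equiv _ (equivToSetOfListsFiber P)

theorem card_listOfLists_eq_card_setOfLists_mul (n k : ℕ) :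
    Nat.card {L // IsListOfLists n k L} =
      Nat.card {P // IsSetOfLists n P ∧ P.card = k} * k.factorial := by
  classical
  refine Nat.card_eq_card_mul_of_card_fiber IsListOfLists.toSetOfLists fun P => ?_
  have hcard : Fintype.card (Fin k) = Fintype.card P.1 := by simp [P.2.2]
  rw [← Nat.card_congr (equivToSetOfListsFiber P), Nat.card_eq_fintype_card,
    Fintype.card_equiv (Fintype.equivOfCardEq hcard), Fintype.card_fin]

theorem card_setOfLists_of_card_eq (hk : 0 < k) (hkn : k ≤ n) :
    Nat.card {P // IsSetOfLists n P ∧ P.card = k} =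
      n.factorial / k.factorial * (n - 1).choose (k - 1) := by
  have h := card_listOfLists_eq_card_setOfLists_mul n k
  rw [card_listOfLists hk hkn] at h
  rw [Nat.div_mul_right_comm (Nat.factorial_dvd_factorial hkn), h,
    Nat.mul_div_cancel _ (Nat.factorial_pos k)]

theorem card_setOfLists_eq_sum_card (hn : 1 ≤ n) :
    Nat.card {P // IsSetOfLists n P} =
      ∑ k ∈ Finset.Icc 1 n, Nat.card {P // IsSetOfLists n P ∧ P.card = k} := by
  let π (P : {P // IsSetOfLists n P}) : Finset.Icc 1 n :=
    ⟨P.1.card, Finset.mem_Icc.mpr ⟨P.2.card_pos hn, P.2.card_le⟩⟩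
  rw [Nat.card_eq_sum_card_fiber π, ← Finset.sum_coe_sort (Finset.Icc 1 n)]
  refine Finset.sum_congr rfl fun k _ => Nat.card_congr ?_
  exact (Equiv.subtypeEquivRight fun _ => Subtype.ext_iff).trans
    (Equiv.subtypeSubtypeEquivSubtypeInter (IsSetOfLists n) (·.card = k.1))

end OrderingBlocks

theorem ncard_setOfLists_eq_sum_stirlingFirst_mul_bell (n : ℕ) :
    Set.ncard {P : Finset (List (Fin n)) | IsSetOfLists n P} =
      ∑ l ∈ Finset.range (n + 1), stirlingFirst n l * bell l := by
  rw [← Nat.card_coe_set_eq, Set.coe_ofPred, card_setOfLists_eq_sum_prod_factorial,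
    sum_prod_factorial_eq_sum_stirlingFirst_mul_bell]

/-- For `n ≥ 1`, the total number of unordered partitions of `[n]`
into nonempty lists equals `∑_{l=0}^{n} c(n,l) B_l`; equivalently
`∑_{k=1}^{n} (n!/k!) C(n-1,k-1) = ∑_{l=0}^{n} c(n,l) B_l`. -/
theorem total_set_of_lists_count (n : ℕ) (hn : 1 ≤ n) :
    Set.ncard {P : Finset (List (Fin n)) | IsSetOfLists n P} =
        ∑ l ∈ Finset.range (n + 1), stirlingFirst n l * bell l ∧
      ∑ k ∈ Finset.Icc 1 n, Nat.factorial n / Nat.factorial k * Nat.choose (n - 1) (k - 1) =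
        ∑ l ∈ Finset.range (n + 1), stirlingFirst n l * bell l := by
  refine ⟨ncard_setOfLists_eq_sum_stirlingFirst_mul_bell n, ?_⟩
  rw [← ncard_setOfLists_eq_sum_stirlingFirst_mul_bell, ← Nat.card_coe_set_eq, Set.coe_ofPred,
    card_setOfLists_eq_sum_card hn]
  refine Finset.sum_congr rfl fun k hk => ?_
  obtain ⟨hk1, hkn⟩ := Finset.mem_Icc.mp hk
  exact (card_setOfLists_of_card_eq hk1 hkn).symm
end
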